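/- Let S and A be nonempty finite sets and let 𝒫 ⊆ Δ(S)^{S×A} be a convex and compact uncertainty set that is weakly s-tractable. Then for every next-state-independent r ∈ ℝ^{S×A×S}, every γ ∈ [0,1) and every μ ∈ Δ(S), there exists a stationary optimal policy: the supremum over all history-dependent policies π ∈ Π_H of inf_{P∈𝒫} ∑_s μ_s v^{π,P}_s equals the maximum over stationary policies π ∈ Δ(A)^S of min_{P∈𝒫} ∑_s μ_s v^{π,P}_s; moreover there exists a stationary policy π* that attains this common value simultaneously for every μ ∈ Δ(S). -/

import Mathlib

/-!
The robust optimal value `V` is the fixed point of the robust Bellman optimality operator `Topt`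
(a contraction by Blackwell's conditions), and a greedy policy `πs` for `V` has `Tpi πs V = V`;
weak s-tractability turns this into `min_P μ ⬝ v πs P = μ ⬝ V`, while for any other stationary
policy the robust fixed point lies below `V`.

History-dependent policies are controlled by a single kernel `P ∈ US` with
`∑ s', P s a s' * (r s a s' + γ * V s') ≤ V s` for all `s` and `a`: under such a kernel no policy,
however it uses the history, can collect more than `V`. This kernel comes from a minimax argument.
Applied to a reward engineered so that `V` is the robust value of a given policy `π`, weak
s-tractability yields a kernel minimising the expected next value under `π` at all states at once,
hence a kernel with `TpiP π r γ P V ≤ V`. Separating the compact convex set of Bellman residuals of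
the kernels in `US` from the nonpositive orthant then upgrades "one kernel per policy" to "one
kernel for all actions".
-/


open scoped BigOperators

namespace RMDP

variable {S A : Type*} [Fintype S] [Fintype A]

def IsKernel (P : S → A → S → ℝ) : Prop := ∀ s a, P s a ∈ stdSimplex ℝ S

def IsPolicy (π : S → A → ℝ) : Prop := ∀ s, π s ∈ stdSimplex ℝ A

def NextStateIndep (r : S → A → S → ℝ) : Prop :=
  ∀ (s : S) (a : A) (s' s'' : S), r s a s' = r s a s''

noncomputable def minOver {K : Type*} (K0 : Set K) (f : K → ℝ) : ℝ := sInf (f '' K0)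

noncomputable def maxOver {K : Type*} (K0 : Set K) (f : K → ℝ) : ℝ := sSup (f '' K0)

noncomputable def TpiP (π : S → A → ℝ) (r : S → A → S → ℝ) (γ : ℝ)
    (P : S → A → S → ℝ) (v : S → ℝ) : S → ℝ :=
  fun s => ∑ a, π s a * ∑ s', P s a s' * (r s a s' + γ * v s')

noncomputable def Tpi (US : Set (S → A → S → ℝ)) (π : S → A → ℝ)
    (r : S → A → S → ℝ) (γ : ℝ) (v : S → ℝ) : S → ℝ :=
  fun s => minOver US (fun P => ∑ a, π s a * ∑ s', P s a s' * (r s a s' + γ * v s'))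

noncomputable def TpiHat (US : Set (S → A → S → ℝ)) (π : S → A → ℝ)
    (r : S → A → S → ℝ) (γ : ℝ) (v : S → ℝ) : S → ℝ :=
  fun s => ∑ a, π s a * minOver US (fun P => ∑ s', P s a s' * (r s a s' + γ * v s'))

noncomputable def Topt (US : Set (S → A → S → ℝ)) (r : S → A → S → ℝ) (γ : ℝ)
    (v : S → ℝ) : S → ℝ :=
  fun s => maxOver (stdSimplex ℝ A)
    (fun p => minOver US (fun P => ∑ a, p a * ∑ s', P s a s' * (r s a s' + γ * v s')))

def IsHPolicy (π : List (S × A) → S → A → ℝ) : Prop := ∀ h s, π h s ∈ stdSimplex ℝ A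

noncomputable def expRHH (π : List (S × A) → S → A → ℝ)
    (Q : List (S × A) → S → A → S → ℝ) (r : S → A → S → ℝ) :
    ℕ → List (S × A) → S → ℝ
  | 0, h, s => ∑ a, π h s a * ∑ s', Q (h ++ [(s, a)]) s a s' * r s a s'
  | (t + 1), h, s =>
      ∑ a, π h s a * ∑ s', Q (h ++ [(s, a)]) s a s' * expRHH π Q r t (h ++ [(s, a)]) s'

noncomputable def vHH (π : List (S × A) → S → A → ℝ)
    (Q : List (S × A) → S → A → S → ℝ) (r : S → A → S → ℝ) (γ : ℝ) (s : S) : ℝ :=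
  ∑' t : ℕ, γ ^ t * expRHH π Q r t [] s

def STractable (US : Set (S → A → S → ℝ)) : Prop :=
  ∀ π : S → A → ℝ, IsPolicy π →
    ∀ (r : S → A → S → ℝ) (γ : ℝ), 0 ≤ γ → γ < 1 →
      ∀ v : (S → A → S → ℝ) → S → ℝ, (∀ P ∈ US, TpiP π r γ P (v P) = v P) →
        ∀ u : S → ℝ, Tpi US π r γ u = u →
          ∀ μ ∈ stdSimplex ℝ S,
            minOver US (fun P => ∑ s, μ s * v P s) = ∑ s, μ s * u s

def SATractable (US : Set (S → A → S → ℝ)) : Prop :=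
  ∀ π : S → A → ℝ, IsPolicy π →
    ∀ (r : S → A → S → ℝ) (γ : ℝ), 0 ≤ γ → γ < 1 →
      ∀ v : (S → A → S → ℝ) → S → ℝ, (∀ P ∈ US, TpiP π r γ P (v P) = v P) →
        ∀ uhat : S → ℝ, TpiHat US π r γ uhat = uhat →
          ∀ μ ∈ stdSimplex ℝ S,
            minOver US (fun P => ∑ s, μ s * v P s) = ∑ s, μ s * uhat s

def WeakSTractable (US : Set (S → A → S → ℝ)) : Prop :=
  ∀ π : S → A → ℝ, IsPolicy π →
    ∀ (r : S → A → S → ℝ), NextStateIndep r → ∀ γ : ℝ, 0 ≤ γ → γ < 1 →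
      ∀ v : (S → A → S → ℝ) → S → ℝ, (∀ P ∈ US, TpiP π r γ P (v P) = v P) →
        ∀ u : S → ℝ, Tpi US π r γ u = u →
          ∀ μ ∈ stdSimplex ℝ S,
            minOver US (fun P => ∑ s, μ s * v P s) = ∑ s, μ s * u s

def WeakSATractable (US : Set (S → A → S → ℝ)) : Prop :=
  ∀ π : S → A → ℝ, IsPolicy π →
    ∀ (r : S → A → S → ℝ), NextStateIndep r → ∀ γ : ℝ, 0 ≤ γ → γ < 1 →
      ∀ v : (S → A → S → ℝ) → S → ℝ, (∀ P ∈ US, TpiP π r γ P (v P) = v P) →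
        ∀ uhat : S → ℝ, TpiHat US π r γ uhat = uhat →
          ∀ μ ∈ stdSimplex ℝ S,
            minOver US (fun P => ∑ s, μ s * v P s) = ∑ s, μ s * uhat s

def SSPs (US : Set (S → A → S → ℝ)) : Prop :=
  ∀ V : S → A → S → ℝ, ∃ Pstar ∈ US, ∀ s : S, ∀ P ∈ US,
    (∑ a, ∑ s', Pstar s a s' * V s a s') ≤ ∑ a, ∑ s', P s a s' * V s a s'

def SSPsa (US : Set (S → A → S → ℝ)) : Prop :=
  ∀ V : S → A → S → ℝ, ∃ Pstar ∈ US, ∀ (s : S) (a : A), ∀ P ∈ US,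
    (∑ s', Pstar s a s' * V s a s') ≤ ∑ s', P s a s' * V s a s'

def WeakSSPs (US : Set (S → A → S → ℝ)) : Prop :=
  ∀ π : S → A → ℝ, IsPolicy π → ∀ V : S → ℝ, ∃ Pstar ∈ US, ∀ s : S, ∀ P ∈ US,
    (∑ a, π s a * ∑ s', Pstar s a s' * V s') ≤ ∑ a, π s a * ∑ s', P s a s' * V s'

def WeakSSPsa (US : Set (S → A → S → ℝ)) : Prop :=
  ∀ V : S → ℝ, ∃ Pstar ∈ US, ∀ (s : S) (a : A), ∀ P ∈ US,
    (∑ s', Pstar s a s' * V s') ≤ ∑ s', P s a s' * V s'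

open Filter Topology Finset

section Extrema

variable {K : Type*} {K0 : Set K} {f g : K → ℝ} {k : K} {c : ℝ}

lemma minOver_eq (hk : k ∈ K0) (hmin : ∀ k' ∈ K0, f k ≤ f k') : minOver K0 f = f k :=
  IsLeast.csInf_eq ⟨Set.mem_image_of_mem f hk, by rintro _ ⟨k', hk', rfl⟩; exact hmin k' hk'⟩

lemma maxOver_eq (hk : k ∈ K0) (hfk : f k = c) (hmax : ∀ k' ∈ K0, f k' ≤ c) :
    maxOver K0 f = c :=
  hfk ▸ IsGreatest.csSup_eq ⟨Set.mem_image_of_mem f hk, by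
    rintro _ ⟨k', hk', rfl⟩; exact hfk ▸ hmax k' hk'⟩

lemma minOver_congr (h : ∀ k ∈ K0, f k = g k) : minOver K0 f = minOver K0 g := by
  rw [minOver, minOver, Set.image_congr h]

lemma minOver_le_of_bddBelow (hf : BddBelow (f '' K0)) (hk : k ∈ K0) : minOver K0 f ≤ f k :=
  csInf_le hf (Set.mem_image_of_mem f hk)

variable [TopologicalSpace K]

lemma minOver_le (hK : IsCompact K0) (hf : ContinuousOn f K0) (hk : k ∈ K0) :
    minOver K0 f ≤ f k :=
  minOver_le_of_bddBelow (hK.bddBelow_image hf) hk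

lemma le_maxOver (hK : IsCompact K0) (hf : ContinuousOn f K0) (hk : k ∈ K0) :
    f k ≤ maxOver K0 f :=
  le_csSup (hK.bddAbove_image hf) (Set.mem_image_of_mem f hk)

end Extrema

section StdSimplex

variable {ι : Type*} [Fintype ι] {p f : ι → ℝ} {c : ℝ}

lemma sum_mul_le_of_mem_stdSimplex (hp : p ∈ stdSimplex ℝ ι) (h : ∀ i, f i ≤ c) :
    ∑ i, p i * f i ≤ c :=
  calc ∑ i, p i * f i ≤ ∑ i, p i * c := by gcongr with i; exacts [hp.1 i, h i]
    _ = c := by rw [← Finset.sum_mul, hp.2, one_mul]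

lemma le_sum_mul_of_mem_stdSimplex (hp : p ∈ stdSimplex ℝ ι) (h : ∀ i, c ≤ f i) :
    c ≤ ∑ i, p i * f i :=
  calc c = ∑ i, p i * c := by rw [← Finset.sum_mul, hp.2, one_mul]
    _ ≤ ∑ i, p i * f i := by gcongr with i; exacts [hp.1 i, h i]

lemma abs_sum_mul_le_of_mem_stdSimplex (hp : p ∈ stdSimplex ℝ ι) (h : ∀ i, |f i| ≤ c) :
    |∑ i, p i * f i| ≤ c :=
  abs_le.2 ⟨le_sum_mul_of_mem_stdSimplex hp fun i => (abs_le.1 (h i)).1,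
    sum_mul_le_of_mem_stdSimplex hp fun i => (abs_le.1 (h i)).2⟩

lemma sum_mul_add_const_of_sum_eq_one (hp : ∑ i, p i = 1) :
    ∑ i, p i * (f i + c) = ∑ i, p i * f i + c := by
  simp only [mul_add, Finset.sum_add_distrib, ← Finset.sum_mul, hp, one_mul]

end StdSimplex

section Blackwell

variable {ι : Type*} {γ : ℝ} {T : (ι → ℝ) → ι → ℝ}

/-- Blackwell's sufficient conditions for a contraction (monotonicity and discounting), merged
into a single inequality. -/
def IsBlackwellOperator (γ : ℝ) (T : (ι → ℝ) → ι → ℝ) : Prop :=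
  ∀ x y : ι → ℝ, ∀ c : ℝ, (∀ i, x i ≤ y i + c) → ∀ i, T x i ≤ T y i + γ * c

namespace IsBlackwellOperator

lemma monotone (hT : IsBlackwellOperator γ T) : Monotone T := fun x y hxy i => by
  simpa using hT x y 0 (by simpa using fun i => hxy i) i

lemma contractingWith [Fintype ι] (hT : IsBlackwellOperator γ T) (hγ0 : 0 ≤ γ) (hγ1 : γ < 1) :
    ContractingWith ⟨γ, hγ0⟩ T := by
  refine ⟨hγ1, LipschitzWith.of_dist_le_mul fun x y => ?_⟩
  have hshift : ∀ x y : ι → ℝ, ∀ i, x i ≤ y i + dist x y := fun x y i => by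
    have := dist_le_pi_dist x y i
    rw [Real.dist_eq] at this
    linarith [le_abs_self (x i - y i)]
  refine (dist_pi_le_iff (by positivity)).2 fun i => ?_
  change dist (T x i) (T y i) ≤ γ * dist x y
  rw [Real.dist_eq, abs_sub_le_iff]
  have := hT y x _ (hshift y x) i
  rw [dist_comm] at this
  constructor <;> linarith [hT x y _ (hshift x y) i]

lemma le_of_isFixedPt [Fintype ι] (hT : IsBlackwellOperator γ T) (hγ0 : 0 ≤ γ) (hγ1 : γ < 1)
    {x y : ι → ℝ} (hx : T x = x) (hy : T y ≤ y) : x ≤ y := by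
  have hC := hT.contractingWith hγ0 hγ1
  have hiter : ∀ n, T^[n] y ≤ y := fun n => by
    induction n with
    | zero => exact le_rfl
    | succ n ih => rw [Function.iterate_succ_apply']; exact (hT.monotone ih).trans hy
  rw [hC.fixedPoint_unique hx]
  exact le_of_tendsto' (hC.tendsto_iterate_fixedPoint y) hiter

end IsBlackwellOperator

end Blackwell

lemma continuousOn_of_forall_isFixedPt {X E : Type*} [TopologicalSpace X]
    [MetricSpace E] {U : Set X} {F : X → E → E} {K : NNReal} {w : X → E}
    (hF : ∀ x ∈ U, ContractingWith K (F x)) (hw : ∀ x ∈ U, Function.IsFixedPt (F x) (w x))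
    (hcont : ∀ e, ContinuousOn (fun x => F x e) U) : ContinuousOn w U := by
  intro x hx
  rw [ContinuousWithinAt, tendsto_iff_dist_tendsto_zero]
  have hlim : Tendsto (fun y => dist (w x) (F y (w x)) / (1 - K)) (𝓝[U] x) (𝓝 0) := by
    have hFx : Tendsto (fun y => F y (w x)) (𝓝[U] x) (𝓝 (w x)) := by
      simpa only [ContinuousWithinAt, (hw x hx).eq] using hcont (w x) x hx
    simpa using ((tendsto_const_nhds (x := w x)).dist hFx).div_const (1 - (K : ℝ))
  refine squeeze_zero' (Eventually.of_forall fun _ => dist_nonneg) ?_ hlim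
  filter_upwards [self_mem_nhdsWithin] with y hy
  rw [dist_comm]
  exact (hF y hy).dist_le_of_fixedPoint (w x) (hw y hy)

section Bellman

variable {US : Set (S → A → S → ℝ)} {π : S → A → ℝ} {r : S → A → S → ℝ} {γ : ℝ}
  {P : S → A → S → ℝ}

lemma continuous_tpiP_kernel (π : S → A → ℝ) (r : S → A → S → ℝ) (γ : ℝ) (v : S → ℝ) (s : S) :
    Continuous fun P => TpiP π r γ P v s := by
  unfold TpiP; fun_prop

lemma continuous_tpiP_uncurry (r : S → A → S → ℝ) (γ : ℝ) (v : S → ℝ) (s : S) :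
    Continuous fun x : (A → ℝ) × (S → A → S → ℝ) => TpiP (fun _ => x.1) r γ x.2 v s := by
  unfold TpiP; fun_prop

lemma tpiP_add_const (hπ : IsPolicy π) (hP : IsKernel P) (v : S → ℝ) (c : ℝ) (s : S) :
    TpiP π r γ P (fun s' => v s' + c) s = TpiP π r γ P v s + γ * c := by
  simp only [TpiP, mul_add γ, ← add_assoc, sum_mul_add_const_of_sum_eq_one (hP s _).2,
    sum_mul_add_const_of_sum_eq_one (hπ s).2]

lemma tpiP_mono (hπ : IsPolicy π) (hP : IsKernel P) (hγ0 : 0 ≤ γ) :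
    Monotone (TpiP π r γ P) := fun x y hxy s => by
  unfold TpiP
  gcongr with a _ s' _
  · exact (hπ s).1 a
  · exact (hP s a).1 s'
  · exact hxy s'

lemma isBlackwellOperator_tpiP (hπ : IsPolicy π) (hP : IsKernel P) (hγ0 : 0 ≤ γ) :
    IsBlackwellOperator γ (TpiP π r γ P) := fun _ y c hxy s =>
  (tpiP_mono hπ hP hγ0 (fun s' => hxy s') s).trans_eq (tpiP_add_const hπ hP y c s)

lemma tpi_apply (v : S → ℝ) (s : S) :
    Tpi US π r γ v s = minOver US fun P => TpiP π r γ P v s :=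
  rfl

lemma tpi_le_tpiP (hcpt : IsCompact US) (hP : P ∈ US) (v : S → ℝ) (s : S) :
    Tpi US π r γ v s ≤ TpiP π r γ P v s :=
  minOver_le hcpt (continuous_tpiP_kernel π r γ v s).continuousOn hP

lemma exists_tpiP_apply_eq_tpi_apply (hcpt : IsCompact US) (hne : US.Nonempty) (v : S → ℝ)
    (s : S) : ∃ P ∈ US, TpiP π r γ P v s = Tpi US π r γ v s := by
  obtain ⟨P, hP, hmin⟩ :=
    hcpt.exists_isMinOn hne (continuous_tpiP_kernel π r γ v s).continuousOn
  exact ⟨P, hP, (minOver_eq hP (isMinOn_iff.1 hmin)).symm⟩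

lemma isBlackwellOperator_tpi (hcpt : IsCompact US) (hne : US.Nonempty)
    (hker : ∀ P ∈ US, IsKernel P) (hπ : IsPolicy π) (hγ0 : 0 ≤ γ) :
    IsBlackwellOperator γ (Tpi US π r γ) := by
  intro x y c hxy s
  obtain ⟨P, hP, hPy⟩ := exists_tpiP_apply_eq_tpi_apply hcpt hne y s
  calc Tpi US π r γ x s ≤ TpiP π r γ P x s := tpi_le_tpiP hcpt hP x s
    _ ≤ TpiP π r γ P y s + γ * c := isBlackwellOperator_tpiP hπ (hker P hP) hγ0 x y c hxy s
    _ = Tpi US π r γ y s + γ * c := by rw [hPy]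

lemma continuous_tpi_const (hcpt : IsCompact US) (v : S → ℝ) (s : S) :
    Continuous fun p : A → ℝ => Tpi US (fun _ => p) r γ v s :=
  hcpt.continuous_sInf (f := fun p P => TpiP (fun _ => p) r γ P v s)
    (continuous_tpiP_uncurry r γ v s)

lemma tpi_le_topt (hcpt : IsCompact US) (hπ : IsPolicy π) (v : S → ℝ) (s : S) :
    Tpi US π r γ v s ≤ Topt US r γ v s :=
  le_maxOver (f := fun p => Tpi US (fun _ => p) r γ v s) (isCompact_stdSimplex ℝ A)
    (continuous_tpi_const hcpt v s).continuousOn (hπ s)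

lemma exists_tpi_eq_topt_apply [Nonempty A] (hcpt : IsCompact US) (v : S → ℝ) (s : S) :
    ∃ p ∈ stdSimplex ℝ A, Tpi US (fun _ => p) r γ v s = Topt US r γ v s := by
  classical
  obtain ⟨p, hp, hmax⟩ := (isCompact_stdSimplex ℝ A).exists_isMaxOn
    ⟨_, single_mem_stdSimplex ℝ (Classical.arbitrary A)⟩
    (continuous_tpi_const hcpt v s).continuousOn
  exact ⟨p, hp, (maxOver_eq hp rfl (isMaxOn_iff.1 hmax)).symm⟩

lemma exists_policy_tpi_eq_topt [Nonempty A] (hcpt : IsCompact US) (v : S → ℝ) :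
    ∃ π, IsPolicy π ∧ Tpi US π r γ v = Topt US r γ v := by
  choose p hp hpv using exists_tpi_eq_topt_apply (r := r) (γ := γ) hcpt v
  exact ⟨p, hp, funext hpv⟩

lemma isBlackwellOperator_topt [Nonempty A] (hcpt : IsCompact US) (hne : US.Nonempty)
    (hker : ∀ P ∈ US, IsKernel P) (hγ0 : 0 ≤ γ) : IsBlackwellOperator γ (Topt US r γ) := by
  intro x y c hxy s
  obtain ⟨p, hp, hpx⟩ := exists_tpi_eq_topt_apply hcpt x s
  calc Topt US r γ x s = Tpi US (fun _ => p) r γ x s := hpx.symm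
    _ ≤ Tpi US (fun _ => p) r γ y s + γ * c :=
      isBlackwellOperator_tpi hcpt hne hker (fun _ => hp) hγ0 x y c hxy s
    _ ≤ Topt US r γ y s + γ * c := by gcongr; exact tpi_le_topt hcpt (fun _ => hp) y s

end Bellman

section HistoryValue

variable {π : List (S × A) → S → A → ℝ} {Q : List (S × A) → S → A → S → ℝ} {r : S → A → S → ℝ}
  {γ : ℝ}

noncomputable def horizonValue (π : List (S × A) → S → A → ℝ) (Q : List (S × A) → S → A → S → ℝ)
    (r : S → A → S → ℝ) (γ : ℝ) (T : ℕ) (h : List (S × A)) (s : S) : ℝ :=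
  ∑ t ∈ range T, γ ^ t * expRHH π Q r t h s

lemma horizonValue_succ (T : ℕ) (h : List (S × A)) (s : S) :
    horizonValue π Q r γ (T + 1) h s = ∑ a, π h s a * ∑ s', Q (h ++ [(s, a)]) s a s' *
      (r s a s' + γ * horizonValue π Q r γ T (h ++ [(s, a)]) s') := by
  simp only [horizonValue, Finset.sum_range_succ', expRHH, pow_zero, one_mul, mul_add,
    Finset.mul_sum, Finset.sum_add_distrib]
  rw [add_comm]
  congr 1
  rw [Finset.sum_comm]
  refine Finset.sum_congr rfl fun a _ => ?_
  rw [Finset.sum_comm]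
  exact Finset.sum_congr rfl fun s' _ => Finset.sum_congr rfl fun t _ => by ring

lemma abs_expRHH_le (hπ : IsHPolicy π) (hQ : ∀ h, IsKernel (Q h)) (t : ℕ) :
    ∀ h s, |expRHH π Q r t h s| ≤ ‖r‖ := by
  have hr : ∀ s a s', |r s a s'| ≤ ‖r‖ := fun s a s' =>
    (norm_le_pi_norm (r s a) s').trans ((norm_le_pi_norm (r s) a).trans (norm_le_pi_norm r s))
  induction t with
  | zero => exact fun h s => abs_sum_mul_le_of_mem_stdSimplex (hπ h s) fun a =>
      abs_sum_mul_le_of_mem_stdSimplex (hQ _ s a) fun s' => hr s a s'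
  | succ t ih => exact fun h s => abs_sum_mul_le_of_mem_stdSimplex (hπ h s) fun a =>
      abs_sum_mul_le_of_mem_stdSimplex (hQ _ s a) fun s' => ih _ s'

lemma norm_discounted_expRHH_le (hπ : IsHPolicy π) (hQ : ∀ h, IsKernel (Q h)) (hγ0 : 0 ≤ γ)
    (t : ℕ) (h : List (S × A)) (s : S) : ‖γ ^ t * expRHH π Q r t h s‖ ≤ ‖r‖ * γ ^ t := by
  rw [norm_mul, norm_pow, Real.norm_eq_abs, Real.norm_eq_abs, abs_of_nonneg hγ0, mul_comm]
  gcongr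
  exact abs_expRHH_le hπ hQ t h s

lemma tendsto_horizonValue (hπ : IsHPolicy π) (hQ : ∀ h, IsKernel (Q h)) (hγ0 : 0 ≤ γ)
    (hγ1 : γ < 1) (s : S) :
    Tendsto (fun T => horizonValue π Q r γ T [] s) atTop (𝓝 (vHH π Q r γ s)) :=
  (Summable.of_norm_bounded ((summable_geometric_of_lt_one hγ0 hγ1).mul_left ‖r‖)
    fun t => norm_discounted_expRHH_le hπ hQ hγ0 t [] s).hasSum.tendsto_sum_nat

lemma abs_vHH_le (hπ : IsHPolicy π) (hQ : ∀ h, IsKernel (Q h)) (hγ0 : 0 ≤ γ) (hγ1 : γ < 1)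
    (s : S) : |vHH π Q r γ s| ≤ ‖r‖ * (1 - γ)⁻¹ :=
  tsum_of_norm_bounded ((hasSum_geometric_of_lt_one hγ0 hγ1).mul_left ‖r‖)
    fun t => norm_discounted_expRHH_le hπ hQ hγ0 t [] s

lemma horizonValue_le_of_bellman_le (hπ : IsHPolicy π) (hQ : ∀ h, IsKernel (Q h))
    (hγ0 : 0 ≤ γ) {V : S → ℝ} {C : ℝ}
    (hV : ∀ h s a, ∑ s', Q h s a s' * (r s a s' + γ * V s') ≤ V s) (hC : ∀ s, 0 ≤ V s + C)
    (T : ℕ) : ∀ h s, horizonValue π Q r γ T h s ≤ V s + γ ^ T * C := by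
  induction T with
  | zero => intro h s; simpa [horizonValue] using hC s
  | succ T ih =>
    intro h s
    rw [horizonValue_succ]
    refine sum_mul_le_of_mem_stdSimplex (hπ h s) fun a => ?_
    calc ∑ s', Q (h ++ [(s, a)]) s a s' *
          (r s a s' + γ * horizonValue π Q r γ T (h ++ [(s, a)]) s')
        ≤ ∑ s', Q (h ++ [(s, a)]) s a s' * ((r s a s' + γ * V s') + γ ^ (T + 1) * C) := by
          refine Finset.sum_le_sum fun s' _ => mul_le_mul_of_nonneg_left ?_ ((hQ _ s a).1 s')
          rw [pow_succ]
          linear_combination mul_le_mul_of_nonneg_left (ih (h ++ [(s, a)]) s') hγ0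
      _ = ∑ s', Q (h ++ [(s, a)]) s a s' * (r s a s' + γ * V s') + γ ^ (T + 1) * C :=
          sum_mul_add_const_of_sum_eq_one (hQ _ s a).2
      _ ≤ V s + γ ^ (T + 1) * C := by gcongr; exact hV _ s a

lemma vHH_le_of_bellman_le (hπ : IsHPolicy π) (hQ : ∀ h, IsKernel (Q h)) (hγ0 : 0 ≤ γ)
    (hγ1 : γ < 1) {V : S → ℝ} (hV : ∀ h s a, ∑ s', Q h s a s' * (r s a s' + γ * V s') ≤ V s)
    (s : S) : vHH π Q r γ s ≤ V s := by
  have hC : ∀ s, 0 ≤ V s + ‖V‖ := fun s => by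
    linarith [neg_abs_le (V s), (Real.norm_eq_abs _ ▸ norm_le_pi_norm V s : |V s| ≤ ‖V‖)]
  have hlim : Tendsto (fun T => V s + γ ^ T * ‖V‖) atTop (𝓝 (V s)) := by
    simpa using ((tendsto_pow_atTop_nhds_zero_of_lt_one hγ0 hγ1).mul_const ‖V‖).const_add (V s)
  exact le_of_tendsto_of_tendsto' (tendsto_horizonValue hπ hQ hγ0 hγ1 s) hlim
    fun T => horizonValue_le_of_bellman_le hπ hQ hγ0 hV hC T [] s

lemma horizonValue_const (π : S → A → ℝ) (P : S → A → S → ℝ) (T : ℕ) (h : List (S × A)) :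
    horizonValue (fun _ => π) (fun _ => P) r γ T h = (TpiP π r γ P)^[T] 0 := by
  induction T generalizing h with
  | zero => funext s; simp [horizonValue]
  | succ T ih => funext s; simp only [horizonValue_succ, ih, Function.iterate_succ_apply']; rfl

lemma vHH_const_eq {π : S → A → ℝ} {P : S → A → S → ℝ} (hπ : IsPolicy π) (hP : IsKernel P)
    (hγ0 : 0 ≤ γ) (hγ1 : γ < 1) {v : S → ℝ} (hv : TpiP π r γ P v = v) :
    vHH (fun _ => π) (fun _ => P) r γ = v := by
  have hC := (isBlackwellOperator_tpiP (r := r) hπ hP hγ0).contractingWith hγ0 hγ1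
  funext s
  refine tendsto_nhds_unique (tendsto_horizonValue (fun _ => hπ) (fun _ => hP) hγ0 hγ1 s) ?_
  rw [hC.fixedPoint_unique hv]
  simpa [horizonValue_const, Function.comp_def] using
    ((continuous_apply s).tendsto _).comp (hC.tendsto_iterate_fixedPoint 0)

end HistoryValue

theorem exists_nonpos_of_forall_dotProduct_nonpos {ι : Type*} [Fintype ι] {C : Set (ι → ℝ)}
    (hconv : Convex ℝ C) (hcpt : IsCompact C) (h : ∀ η : ι → ℝ, 0 ≤ η → ∃ x ∈ C, η ⬝ᵥ x ≤ 0) :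
    ∃ x ∈ C, x ≤ 0 := by
  classical
  by_contra! hC
  obtain ⟨f, u, v, hfC, huv, hfO⟩ := geometric_hahn_banach_compact_closed hconv hcpt
    (convex_Iic 0) isClosed_Iic (Set.disjoint_left.2 fun x hx hx0 => hC x hx hx0)
  have hv : v < 0 := by simpa using hfO 0 (Set.mem_Iic.2 le_rfl)
  -- `f` is bounded below on the cone `Iic 0`, hence nonnegative there
  have hf : ∀ y ≤ (0 : ι → ℝ), 0 ≤ f y := by
    intro y hy
    by_contra! hfy
    have := hfO ((v / f y) • y)
      (smul_nonpos_of_nonneg_of_nonpos (div_nonneg_of_nonpos hv.le hfy.le) hy)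
    rw [map_smul, smul_eq_mul, div_mul_cancel₀ _ hfy.ne] at this
    exact lt_irrefl _ this
  obtain ⟨x, hx, hηx⟩ := h (fun i => f (-Pi.single i 1))
    fun i => hf _ (neg_nonpos.2 (Pi.single_nonneg.2 zero_le_one))
  have hdot : (fun i => f (-Pi.single i 1)) ⬝ᵥ x = -f x := by
    conv_rhs => rw [← Finset.univ_sum_single x]
    simp only [dotProduct, map_neg, map_sum, ← Finset.sum_neg_distrib]
    refine Finset.sum_congr rfl fun i _ => ?_
    rw [neg_mul, mul_comm, ← smul_eq_mul, ← map_smul, ← Pi.single_smul', smul_eq_mul,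
      mul_one]
  linarith [hfC x hx]

section Tractable

variable {US : Set (S → A → S → ℝ)} {π : S → A → ℝ} {r : S → A → S → ℝ} {γ : ℝ}

/-- For next-state-independent rewards, `r s a s` stands for the common value of `r s a ·`. -/
lemma tpiP_of_nextStateIndep (hr : NextStateIndep r) {P : S → A → S → ℝ} (hP : IsKernel P)
    (v : S → ℝ) (s : S) :
    TpiP π r γ P v s = ∑ a, π s a * r s a s + γ * ∑ a, π s a * ∑ s', P s a s' * v s' := by
  simp only [TpiP, hr s _ _ s, mul_add, Finset.sum_add_distrib, ← Finset.sum_mul, (hP s _).2,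
    one_mul, Finset.mul_sum]
  congr 1
  exact Finset.sum_congr rfl fun a _ => Finset.sum_congr rfl fun s' _ => by ring

lemma exists_isFixedPt_tpiP (hker : ∀ P ∈ US, IsKernel P) (hπ : IsPolicy π) (hγ0 : 0 ≤ γ)
    (hγ1 : γ < 1) : ∃ w : (S → A → S → ℝ) → S → ℝ, ∀ P ∈ US, TpiP π r γ P (w P) = w P := by
  classical
  have hC := fun P (hP : P ∈ US) =>
    (isBlackwellOperator_tpiP (r := r) hπ (hker P hP) hγ0).contractingWith hγ0 hγ1
  exact ⟨fun P => if hP : P ∈ US then ContractingWith.fixedPoint _ (hC P hP) else 0,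
    fun P hP => by simp only [dif_pos hP]; exact (hC P hP).fixedPoint_isFixedPt⟩

lemma WeakSTractable.exists_value_eq_robustValue [Nonempty S] (hws : WeakSTractable US)
    (hcpt : IsCompact US) (hne : US.Nonempty) (hker : ∀ P ∈ US, IsKernel P) (hπ : IsPolicy π)
    (hr : NextStateIndep r) (hγ0 : 0 ≤ γ) (hγ1 : γ < 1) {w : (S → A → S → ℝ) → S → ℝ}
    (hw : ∀ P ∈ US, TpiP π r γ P (w P) = w P) {u : S → ℝ} (hu : Tpi US π r γ u = u) :
    ∃ P ∈ US, w P = u := by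
  have hC := fun P (hP : P ∈ US) =>
    (isBlackwellOperator_tpiP (r := r) hπ (hker P hP) hγ0).contractingWith hγ0 hγ1
  have huw : ∀ P ∈ US, u ≤ w P := fun P hP =>
    (isBlackwellOperator_tpi hcpt hne hker hπ hγ0).le_of_isFixedPt hγ0 hγ1 hu
      fun s => (tpi_le_tpiP hcpt hP (w P) s).trans_eq (congrFun (hw P hP) s)
  have hwcont : ContinuousOn w US := continuousOn_of_forall_isFixedPt hC hw
    fun v => (continuous_pi fun s => continuous_tpiP_kernel π r γ v s).continuousOn
  -- the uniform distribution charges every state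
  let μ := (stdSimplex.barycenter : stdSimplex ℝ S).val
  have hμ : ∀ s, μ s ≠ 0 := fun s => by simp [μ]
  obtain ⟨P, hP, hPmin⟩ := hcpt.exists_isMinOn hne (f := fun P => ∑ s, μ s * w P s) (by fun_prop)
  have hsum : ∑ s, μ s * u s = ∑ s, μ s * w P s := by
    rw [← hws π hπ r hr γ hγ0 hγ1 w hw u hu μ stdSimplex.barycenter.prop,
      minOver_eq hP (isMinOn_iff.1 hPmin)]
  refine ⟨P, hP, funext fun s => ?_⟩
  have hle : ∀ s ∈ Finset.univ, μ s * u s ≤ μ s * w P s := fun s _ =>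
    mul_le_mul_of_nonneg_left (huw P hP s) (stdSimplex.barycenter.prop.1 s)
  exact (mul_left_cancel₀ (hμ s) ((Finset.sum_eq_sum_iff_of_le hle).1 hsum s (mem_univ s))).symm

theorem WeakSTractable.weakSSPs [Nonempty S] (hws : WeakSTractable US) (hcpt : IsCompact US)
    (hne : US.Nonempty) (hker : ∀ P ∈ US, IsKernel P) : WeakSSPs US := by
  intro π hπ V
  let G : S → (S → A → S → ℝ) → ℝ := fun s P => ∑ a, π s a * ∑ s', P s a s' * V s'
  choose Pmin hPmin hGmin using fun s =>
    hcpt.exists_isMinOn hne (f := G s) (by fun_prop)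
  -- a reward for which `V` is the robust value of `π` (with discount `1 / 2`)
  let r' : S → A → S → ℝ := fun s _ _ => V s - 1 / 2 * G s (Pmin s)
  have hr' : NextStateIndep r' := fun _ _ _ _ => rfl
  have hT : ∀ P ∈ US, ∀ s, TpiP π r' (1 / 2) P V s = V s + 1 / 2 * (G s P - G s (Pmin s)) := by
    intro P hP s
    rw [tpiP_of_nextStateIndep hr' (hker P hP), ← Finset.sum_mul, (hπ s).2]
    ring
  have hTV : Tpi US π r' (1 / 2) V = V := funext fun s => by
    rw [tpi_apply, minOver_eq (hPmin s) fun P hP => ?_]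
    · simpa using hT _ (hPmin s) s
    · rw [hT _ (hPmin s), hT P hP]
      linarith [isMinOn_iff.1 (hGmin s) P hP]
  obtain ⟨w, hw⟩ := exists_isFixedPt_tpiP (r := r') (γ := 1 / 2) hker hπ (by norm_num) (by norm_num)
  obtain ⟨P, hP, hwP⟩ :=
    hws.exists_value_eq_robustValue hcpt hne hker hπ hr' (by norm_num) (by norm_num) hw hTV
  refine ⟨P, hP, fun s Q hQ => ?_⟩
  have hfix := hT P hP s
  rw [← hwP, hw P hP] at hfix
  linarith [isMinOn_iff.1 (hGmin s) Q hQ]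

end Tractable

lemma exists_policy_mul_eq {ι κ : Type*} [Fintype κ] [Nonempty κ] (η : ι → κ → ℝ)
    (hη : ∀ i j, 0 ≤ η i j) : ∃ π, IsPolicy π ∧ ∀ i j, η i j = (∑ j', η i j') * π i j := by
  classical
  refine ⟨fun i => if ∑ j', η i j' = 0 then Pi.single (Classical.arbitrary κ) 1
    else fun j => η i j / ∑ j', η i j', fun i => ?_, fun i j => ?_⟩ <;> dsimp only
  · split_ifs with h
    · exact single_mem_stdSimplex ℝ _
    · exact ⟨fun j => div_nonneg (hη i j) (Finset.sum_nonneg fun j _ => hη i j),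
        by rw [← Finset.sum_div, div_self h]⟩
  · split_ifs with h
    · rw [h, zero_mul]
      exact (Finset.sum_eq_zero_iff_of_nonneg fun j _ => hη i j).1 h j (mem_univ j)
    · field_simp

section WorstCaseKernel

variable {US : Set (S → A → S → ℝ)} {π : S → A → ℝ} {r : S → A → S → ℝ} {γ : ℝ}

lemma WeakSSPs.exists_tpiP_eq_tpi (hssp : WeakSSPs US) (hker : ∀ P ∈ US, IsKernel P)
    (hr : NextStateIndep r) (hγ0 : 0 ≤ γ) (hπ : IsPolicy π) (v : S → ℝ) :
    ∃ P ∈ US, TpiP π r γ P v = Tpi US π r γ v := by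
  obtain ⟨P, hP, hmin⟩ := hssp π hπ v
  refine ⟨P, hP, funext fun s => ((tpi_apply v s).trans (minOver_eq hP fun Q hQ => ?_)).symm⟩
  rw [tpiP_of_nextStateIndep hr (hker P hP), tpiP_of_nextStateIndep hr (hker Q hQ)]
  exact (add_le_add_iff_left _).2 (mul_le_mul_of_nonneg_left (hmin s Q hQ) hγ0)

theorem exists_kernel_bellman_le_of_forall_policy [Nonempty A] (hconv : Convex ℝ US)
    (hcpt : IsCompact US) {V : S → ℝ} (h : ∀ π, IsPolicy π → ∃ P ∈ US, TpiP π r γ P V ≤ V) :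
    ∃ P ∈ US, ∀ s a, ∑ s', P s a s' * (r s a s' + γ * V s') ≤ V s := by
  let Φ : (S → A → S → ℝ) → S × A → ℝ :=
    fun P i => ∑ s', P i.1 i.2 s' * (r i.1 i.2 s' + γ * V s') - V i.1
  have hconvΦ : Convex ℝ (Φ '' US) := by
    rintro _ ⟨P, hP, rfl⟩ _ ⟨Q, hQ, rfl⟩ a b ha hb hab
    refine ⟨a • P + b • Q, hconv hP hQ ha hb hab, funext fun i => ?_⟩
    simp only [Φ, Pi.add_apply, Pi.smul_apply, smul_eq_mul, add_mul, Finset.sum_add_distrib,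
      mul_assoc, ← Finset.mul_sum]
    linear_combination V i.1 * hab
  have hsep : ∀ η : S × A → ℝ, 0 ≤ η → ∃ x ∈ Φ '' US, η ⬝ᵥ x ≤ 0 := by
    intro η hη
    obtain ⟨π, hπ, hηπ⟩ := exists_policy_mul_eq (fun s a => η (s, a)) fun s a => hη (s, a)
    obtain ⟨P, hP, hPV⟩ := h π hπ
    have hπΦ : ∀ s, ∑ a, π s a * Φ P (s, a) = TpiP π r γ P V s - V s := fun s => by
      simp only [Φ, mul_sub, Finset.sum_sub_distrib, ← Finset.sum_mul, (hπ s).2, one_mul, TpiP]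
    refine ⟨Φ P, Set.mem_image_of_mem Φ hP, ?_⟩
    calc η ⬝ᵥ Φ P = ∑ s, ∑ a, η (s, a) * Φ P (s, a) := Fintype.sum_prod_type _
      _ = ∑ s, (∑ a', η (s, a')) * ∑ a, π s a * Φ P (s, a) := Finset.sum_congr rfl fun s _ => by
          rw [Finset.mul_sum]
          exact Finset.sum_congr rfl fun a _ => by rw [hηπ s a]; ring
      _ ≤ 0 := Finset.sum_nonpos fun s _ => mul_nonpos_of_nonneg_of_nonpos
          (Finset.sum_nonneg fun a _ => hη (s, a)) (by rw [hπΦ]; exact sub_nonpos.2 (hPV s))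
  obtain ⟨_, ⟨P, hP, rfl⟩, hPΦ⟩ :=
    exists_nonpos_of_forall_dotProduct_nonpos hconvΦ (hcpt.image (by fun_prop)) hsep
  exact ⟨P, hP, fun s a => sub_nonpos.1 (hPΦ (s, a))⟩

end WorstCaseKernel

section RobustValue

variable {US : Set (S → A → S → ℝ)} {π : S → A → ℝ} {r : S → A → S → ℝ} {γ : ℝ}
  {V : S → ℝ} {μ : S → ℝ}

theorem WeakSTractable.exists_kernel_bellman_le [Nonempty S] [Nonempty A]
    (hws : WeakSTractable US) (hconv : Convex ℝ US) (hcpt : IsCompact US) (hne : US.Nonempty)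
    (hker : ∀ P ∈ US, IsKernel P) (hr : NextStateIndep r) (hγ0 : 0 ≤ γ)
    (hV : Topt US r γ V = V) :
    ∃ P ∈ US, ∀ s a, ∑ s', P s a s' * (r s a s' + γ * V s') ≤ V s := by
  refine exists_kernel_bellman_le_of_forall_policy hconv hcpt fun π hπ => ?_
  obtain ⟨P, hP, hPπ⟩ := (hws.weakSSPs hcpt hne hker).exists_tpiP_eq_tpi hker hr hγ0 hπ V
  refine ⟨P, hP, fun s => ?_⟩
  calc TpiP π r γ P V s = Tpi US π r γ V s := congrFun hPπ s
    _ ≤ Topt US r γ V s := tpi_le_topt hcpt hπ V s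
    _ = V s := congrFun hV s

lemma minOver_value_le_of_topt_eq (hws : WeakSTractable US) (hcpt : IsCompact US)
    (hne : US.Nonempty) (hker : ∀ P ∈ US, IsKernel P) (hr : NextStateIndep r) (hγ0 : 0 ≤ γ)
    (hγ1 : γ < 1) (hπ : IsPolicy π) {v : (S → A → S → ℝ) → S → ℝ}
    (hv : ∀ P ∈ US, TpiP π r γ P (v P) = v P) (hV : Topt US r γ V = V)
    (hμ : μ ∈ stdSimplex ℝ S) :
    minOver US (fun P => ∑ s, μ s * v P s) ≤ ∑ s, μ s * V s := by
  have hT := isBlackwellOperator_tpi (r := r) hcpt hne hker hπ hγ0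
  have hu := (hT.contractingWith hγ0 hγ1).fixedPoint_isFixedPt
  have huV := hT.le_of_isFixedPt hγ0 hγ1 hu fun s =>
    (tpi_le_topt hcpt hπ V s).trans_eq (congrFun hV s)
  rw [hws π hπ r hr γ hγ0 hγ1 v hv _ hu μ hμ]
  exact Finset.sum_le_sum fun s _ => mul_le_mul_of_nonneg_left (huV s) (hμ.1 s)

lemma minOver_vHH_le_of_bellman_le (hker : ∀ P ∈ US, IsKernel P) (hγ0 : 0 ≤ γ) (hγ1 : γ < 1)
    {πh : List (S × A) → S → A → ℝ} (hπh : IsHPolicy πh) {P : S → A → S → ℝ} (hP : P ∈ US)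
    (hPV : ∀ s a, ∑ s', P s a s' * (r s a s' + γ * V s') ≤ V s) (hμ : μ ∈ stdSimplex ℝ S) :
    minOver US (fun Q => ∑ s, μ s * vHH πh (fun _ => Q) r γ s) ≤ ∑ s, μ s * V s := by
  refine (minOver_le_of_bddBelow ⟨-(‖r‖ * (1 - γ)⁻¹), ?_⟩ hP).trans ?_
  · rintro _ ⟨Q, hQ, rfl⟩
    exact le_sum_mul_of_mem_stdSimplex hμ fun s =>
      neg_le_of_abs_le (abs_vHH_le hπh (fun _ => hker Q hQ) hγ0 hγ1 s)
  · exact Finset.sum_le_sum fun s _ => mul_le_mul_of_nonneg_left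
      (vHH_le_of_bellman_le hπh (fun _ => hker P hP) hγ0 hγ1 (fun _ => hPV) s) (hμ.1 s)

end RobustValue

theorem stmt11 {S A : Type*} [Fintype S] [Fintype A] [Nonempty S] [Nonempty A]
    (US : Set (S → A → S → ℝ)) (hne : US.Nonempty) (hker : ∀ P ∈ US, IsKernel P)
    (hcpt : IsCompact US) (hconv : Convex ℝ US) (hws : WeakSTractable US)
    (r : S → A → S → ℝ) (hr : NextStateIndep r) (γ : ℝ) (hγ0 : 0 ≤ γ) (hγ1 : γ < 1)
    (v : (S → A → ℝ) → (S → A → S → ℝ) → S → ℝ)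
    (hv : ∀ π : S → A → ℝ, IsPolicy π → ∀ P ∈ US, TpiP π r γ P (v π P) = v π P) :
    (∀ μ ∈ stdSimplex ℝ S,
      maxOver {π : List (S × A) → S → A → ℝ | IsHPolicy π}
          (fun π => minOver US (fun P => ∑ s, μ s * vHH π (fun _ => P) r γ s)) =
        maxOver {π : S → A → ℝ | IsPolicy π}
          (fun π => minOver US (fun P => ∑ s, μ s * v π P s))) ∧
      ∃ πstar : S → A → ℝ, IsPolicy πstar ∧
        ∀ μ ∈ stdSimplex ℝ S,
          minOver US (fun P => ∑ s, μ s * v πstar P s) =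
            maxOver {π : List (S × A) → S → A → ℝ | IsHPolicy π}
              (fun π => minOver US (fun P => ∑ s, μ s * vHH π (fun _ => P) r γ s)) := by
  obtain ⟨V, hV⟩ : ∃ V, Topt US r γ V = V := ⟨_,
    ((isBlackwellOperator_topt hcpt hne hker hγ0).contractingWith hγ0 hγ1).fixedPoint_isFixedPt⟩
  obtain ⟨πs, hπs, hgreedy⟩ := exists_policy_tpi_eq_topt (r := r) (γ := γ) hcpt V
  obtain ⟨Pbar, hPbar, hPbarV⟩ := hws.exists_kernel_bellman_le hconv hcpt hne hker hr hγ0 hV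
  have hstar : ∀ μ ∈ stdSimplex ℝ S,
      minOver US (fun P => ∑ s, μ s * v πs P s) = ∑ s, μ s * V s :=
    hws πs hπs r hr γ hγ0 hγ1 (v πs) (hv πs hπs) V (hgreedy.trans hV)
  have hhist : ∀ μ ∈ stdSimplex ℝ S, maxOver {π : List (S × A) → S → A → ℝ | IsHPolicy π}
      (fun π => minOver US (fun P => ∑ s, μ s * vHH π (fun _ => P) r γ s)) = ∑ s, μ s * V s :=
    fun μ hμ => maxOver_eq (k := fun _ => πs) (fun _ => hπs)
      ((minOver_congr fun P hP => by
        rw [vHH_const_eq hπs (hker P hP) hγ0 hγ1 (hv πs hπs P hP)]).trans (hstar μ hμ))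
      fun _ hπh => minOver_vHH_le_of_bellman_le hker hγ0 hγ1 hπh hPbar hPbarV hμ
  have hstat : ∀ μ ∈ stdSimplex ℝ S, maxOver {π : S → A → ℝ | IsPolicy π}
      (fun π => minOver US (fun P => ∑ s, μ s * v π P s)) = ∑ s, μ s * V s :=
    fun μ hμ => maxOver_eq hπs (hstar μ hμ) fun π hπ =>
      minOver_value_le_of_topt_eq hws hcpt hne hker hr hγ0 hγ1 hπ (hv π hπ) hV hμ
  exact ⟨fun μ hμ => (hhist μ hμ).trans (hstat μ hμ).symm,
    πs, hπs, fun μ hμ => (hstar μ hμ).trans (hhist μ hμ).symm⟩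

end RMDP
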